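/- Let A be a 2×2 expanding integer matrix with characteristic polynomial f(x) = x² + 4x + 4, and let 𝒟 = {0, 1, 2, 4}v where v ∈ ℤ² is such that {v, Av} is linearly independent over ℝ. Then v = −2A^{−1}v + 2A^{−2}v + 2A^{−3}v − 2A^{−4}v + 2A^{−5}v − 2A^{−6}v + ⋯ ∈ T − T and 2v = −4A^{−1}v + 4A^{−2}v + 4A^{−3}v − 4A^{−4}v + 4A^{−5}v − 4A^{−6}v + ⋯ ∈ T − T; consequently the self-affine fractal T = T(A, 𝒟) is connected. -/

import Mathlib

open Matrix Polynomial Pointwise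

noncomputable section

/-- The real matrix obtained from a 2×2 integer matrix. -/
def toR (A : Matrix (Fin 2) (Fin 2) ℤ) : Matrix (Fin 2) (Fin 2) ℝ :=
  A.map (Int.cast : ℤ → ℝ)

/-- The real vector obtained from an integer vector. -/
def vecR (v : Fin 2 → ℤ) : Fin 2 → ℝ := fun j => (v j : ℝ)

/-- A 2×2 integer matrix is expanding if every complex eigenvalue has modulus > 1. -/
def IsExpanding (A : Matrix (Fin 2) (Fin 2) ℤ) : Prop :=
  ∀ z ∈ spectrum ℂ (A.map (Int.cast : ℤ → ℂ)), 1 < ‖z‖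

/-- The self-affine fractal `T(A, D v)`, i.e. the set of all sums
`∑_{i=1}^∞ A^{-i} (d_i v)` with digits `d_i ∈ D`. -/
def attractor (A : Matrix (Fin 2) (Fin 2) ℤ) (D : Set ℤ) (v : Fin 2 → ℤ) :
    Set (Fin 2 → ℝ) :=
  { x | ∃ d : ℕ → ℤ, (∀ i, d i ∈ D) ∧
      HasSum (fun i : ℕ => (d i : ℝ) • ((toR A)⁻¹ ^ (i + 1)).mulVec (vecR v)) x }

/-!
Since `(A + 2)² = 0`, every power of `A⁻¹` is explicit: `A⁻ᵏ = (-1/2)ᵏ (1 + k/2 (A + 2))`.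
So both expansions reduce to a geometric series and its derivative. The coefficients of the
expansion of `v` are `±2`; their positive and negative parts are digit sequences with values in
`{0, 2}` (in `{0, 4}` for `2v`), which exhibits `v` and `2v` as differences of points of `T`.

Writing `T = ⋃_δ A⁻¹(T + δv)`, this says that the pieces for the digits `1, 0`, for `2, 1` and
for `4, 2` intersect. By induction on `n`, any two points of `T` are then joined by a chain in `T`
whose steps lie in `A⁻ⁿ(T - T)`; these steps become arbitrarily short, and a compact set in
which any two points are joined by arbitrarily fine chains is connected.
-/

open Relation Filter Topology

theorem HasSum.matrix_mulVec {ι m n R : Type*} [Fintype n] [CommRing R] [TopologicalSpace R]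
    [IsTopologicalRing R] (M : Matrix m n R) {f : ι → n → R} {x : n → R} (h : HasSum f x) :
    HasSum (fun i => M *ᵥ f i) (M *ᵥ x) :=
  h.map (Matrix.mulVecLin M) (continuous_const.matrix_mulVec continuous_id)

lemma one_add_pow_of_mul_self_eq_zero {R : Type*} [Semiring R] {N : R} (hN : N * N = 0)
    (k : ℕ) : (1 + N) ^ k = 1 + k • N := by
  induction k with
  | zero => simp
  | succ k ih =>
    rw [pow_succ, ih, add_mul, mul_add, mul_add, smul_mul_assoc, smul_mul_assoc, hN, succ_nsmul]
    simp only [one_mul, mul_one, smul_zero, add_zero]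
    abel

lemma IsCompact.isPreconnected_of_forall_reflTransGen {α : Type*} [MetricSpace α]
    {K : Set α} (hK : IsCompact K)
    (h : ∀ ε > 0, ∀ x ∈ K, ∀ y ∈ K,
      ReflTransGen (fun a b => a ∈ K ∧ b ∈ K ∧ dist a b < ε) x y) :
    IsPreconnected K := by
  rw [isPreconnected_iff_subset_of_fully_disjoint_closed hK.isClosed]
  intro u w hu hw hKuw huw
  by_cases hKu : ∃ x ∈ K, x ∈ u
  · obtain ⟨x, hxK, hxu⟩ := hKu
    obtain ⟨r, hr, hsep⟩ := Metric.exists_pos_forall_lt_edist (hK.inter_right hu) hw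
      (huw.mono_left Set.inter_subset_right)
    refine Or.inl fun y hyK => ?_
    induction h r hr x hxK y hyK with
    | refl => exact hxu
    | tail _ hbc hbu =>
      obtain ⟨hbK, hcK, hbc⟩ := hbc
      refine (hKuw hcK).resolve_right fun hcw => ?_
      have hsep' := hsep _ ⟨hbK, hbu hbK⟩ _ hcw
      rw [edist_nndist, ENNReal.coe_lt_coe, ← NNReal.coe_lt_coe, coe_nndist] at hsep'
      exact hsep'.not_gt hbc
  · push Not at hKu
    exact Or.inr fun x hx => (hKuw hx).resolve_left (hKu x hx)

section Attractor

/-- The maps of the iterated function system: `T = ⋃_{δ ∈ D} digitMap A v δ '' T`. -/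
def digitMap (A : Matrix (Fin 2) (Fin 2) ℤ) (v : Fin 2 → ℤ) (δ : ℤ) (x : Fin 2 → ℝ) :
    Fin 2 → ℝ :=
  (toR A)⁻¹ *ᵥ (x + (δ : ℝ) • vecR v)

def AttractorStep (A : Matrix (Fin 2) (Fin 2) ℤ) (D : Set ℤ) (v : Fin 2 → ℤ) (n : ℕ)
    (x y : Fin 2 → ℝ) : Prop :=
  x ∈ attractor A D v ∧ y ∈ attractor A D v ∧
    ∃ a ∈ attractor A D v, ∃ b ∈ attractor A D v, y - x = (toR A)⁻¹ ^ n *ᵥ (a - b)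

/-- `(δ - δ') v ∈ T - T` makes the pieces `digitMap A v δ '' T` and `digitMap A v δ' '' T`
intersect (`digitMap_eq_of_sub_eq`). -/
def DigitAdj (A : Matrix (Fin 2) (Fin 2) ℤ) (D : Set ℤ) (v : Fin 2 → ℤ) (δ δ' : ℤ) : Prop :=
  δ ∈ D ∧ δ' ∈ D ∧ ((δ : ℝ) - δ') • vecR v ∈ attractor A D v - attractor A D v

variable {A : Matrix (Fin 2) (Fin 2) ℤ} {v : Fin 2 → ℤ} {D : Set ℤ}

lemma exists_forall_abs_le_of_finite (hD : D.Finite) : ∃ M : ℝ, ∀ δ ∈ D, |(δ : ℝ)| ≤ M := by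
  obtain ⟨M, hM⟩ := (hD.image fun δ : ℤ => |(δ : ℝ)|).bddAbove
  exact ⟨M, fun δ hδ => hM ⟨δ, hδ, rfl⟩⟩

lemma norm_intCast_smul_le {M : ℝ} (hM : ∀ δ ∈ D, |(δ : ℝ)| ≤ M) {δ : ℤ} (hδ : δ ∈ D)
    (w : Fin 2 → ℝ) : ‖(δ : ℝ) • w‖ ≤ M * ‖w‖ := by
  rw [norm_smul, Real.norm_eq_abs]
  exact mul_le_mul_of_nonneg_right (hM δ hδ) (norm_nonneg w)

lemma norm_pow_mulVec_le {M : ℝ} (hM : ∀ δ ∈ D, |(δ : ℝ)| ≤ M)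
    (hB : Summable fun i => ‖(toR A)⁻¹ ^ i *ᵥ vecR v‖) {a : Fin 2 → ℝ}
    (ha : a ∈ attractor A D v) (n : ℕ) :
    ‖(toR A)⁻¹ ^ n *ᵥ a‖ ≤ M * ∑' i, ‖(toR A)⁻¹ ^ (i + (n + 1)) *ᵥ vecR v‖ := by
  obtain ⟨d, hd, hsum⟩ := ha
  refine (hsum.matrix_mulVec ((toR A)⁻¹ ^ n)).norm_le_of_bounded
    (((summable_nat_add_iff (n + 1)).mpr hB).hasSum.mul_left M) fun i => ?_
  rw [mulVec_smul, mulVec_mulVec, ← pow_add, show n + (i + 1) = i + (n + 1) by ring]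
  exact norm_intCast_smul_le hM (hd i) _

lemma hasSum_digitMap {d d' : ℕ → ℤ} {δ : ℤ} {y : Fin 2 → ℝ}
    (hy : HasSum (fun i => (d i : ℝ) • (toR A)⁻¹ ^ (i + 1) *ᵥ vecR v) y)
    (h0 : d' 0 = δ) (hsucc : ∀ n, d' (n + 1) = d n) :
    HasSum (fun i => (d' i : ℝ) • (toR A)⁻¹ ^ (i + 1) *ᵥ vecR v) (digitMap A v δ y) := by
  have hshift : HasSum (fun n => (d' (n + 1) : ℝ) • (toR A)⁻¹ ^ (n + 1 + 1) *ᵥ vecR v)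
      ((toR A)⁻¹ *ᵥ y) := by
    have := hy.matrix_mulVec (toR A)⁻¹
    simp only [mulVec_smul, mulVec_mulVec, ← pow_succ'] at this
    simpa only [hsucc] using this
  have hfirst : digitMap A v δ y =
      (d' 0 : ℝ) • (toR A)⁻¹ ^ (0 + 1) *ᵥ vecR v + (toR A)⁻¹ *ᵥ y := by
    rw [digitMap, mulVec_add, mulVec_smul, h0, zero_add, pow_one, add_comm]
  rw [hfirst]
  exact hshift.zero_add

lemma digitMap_mem_attractor {δ : ℤ} (hδ : δ ∈ D) {x : Fin 2 → ℝ}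
    (hx : x ∈ attractor A D v) : digitMap A v δ x ∈ attractor A D v := by
  obtain ⟨d, hd, hsum⟩ := hx
  refine ⟨fun i => if i = 0 then δ else d (i - 1), fun i => ?_,
    hasSum_digitMap hsum (by simp) fun n => by simp⟩
  dsimp only
  split_ifs
  exacts [hδ, hd _]

lemma digitMap_eq_of_sub_eq {δ δ' : ℤ} {a b : Fin 2 → ℝ}
    (h : a - b = ((δ : ℝ) - δ') • vecR v) : digitMap A v δ b = digitMap A v δ' a := by
  rw [sub_eq_iff_eq_add] at h
  rw [digitMap, digitMap, h]
  congr 1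
  module

lemma AttractorStep.symm {n : ℕ} {x y : Fin 2 → ℝ} (h : AttractorStep A D v n x y) :
    AttractorStep A D v n y x := by
  obtain ⟨hx, hy, a, ha, b, hb, hab⟩ := h
  exact ⟨hy, hx, b, hb, a, ha, by rw [← neg_sub, hab, ← mulVec_neg, neg_sub]⟩

lemma AttractorStep.digitMap {n : ℕ} {x y : Fin 2 → ℝ} {δ : ℤ} (hδ : δ ∈ D)
    (h : AttractorStep A D v n x y) :
    AttractorStep A D v (n + 1) (digitMap A v δ x) (digitMap A v δ y) := by
  obtain ⟨hx, hy, a, ha, b, hb, hab⟩ := h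
  refine ⟨digitMap_mem_attractor hδ hx, digitMap_mem_attractor hδ hy, a, ha, b, hb, ?_⟩
  rw [_root_.digitMap, _root_.digitMap, ← mulVec_sub, add_sub_add_right_eq_sub, hab,
    mulVec_mulVec, ← pow_succ']

variable (hD : D.Finite) (hB : Summable fun i => ‖(toR A)⁻¹ ^ i *ᵥ vecR v‖)
include hD hB

lemma summable_digitSeries {d : ℕ → ℤ} (hd : ∀ i, d i ∈ D) :
    Summable fun i => (d i : ℝ) • (toR A)⁻¹ ^ (i + 1) *ᵥ vecR v := by
  obtain ⟨M, hM⟩ := exists_forall_abs_le_of_finite hD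
  exact .of_norm_bounded (((summable_nat_add_iff 1).mpr hB).mul_left M) fun i =>
    norm_intCast_smul_le hM (hd i) _

lemma tsum_mem_attractor {d : ℕ → ℤ} (hd : ∀ i, d i ∈ D) :
    ∑' i, (d i : ℝ) • (toR A)⁻¹ ^ (i + 1) *ᵥ vecR v ∈ attractor A D v :=
  ⟨d, hd, (summable_digitSeries hD hB hd).hasSum⟩

lemma attractor_eq_range : attractor A D v =
    Set.range fun d : ℕ → D => ∑' i, ((d i : ℤ) : ℝ) • (toR A)⁻¹ ^ (i + 1) *ᵥ vecR v := by
  ext x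
  constructor
  · rintro ⟨d, hd, hx⟩
    exact ⟨fun i => ⟨d i, hd i⟩, hx.tsum_eq⟩
  · rintro ⟨d, rfl⟩
    exact tsum_mem_attractor hD hB fun i => (d i).2

lemma isCompact_attractor : IsCompact (attractor A D v) := by
  have := hD.to_subtype
  obtain ⟨M, hM⟩ := exists_forall_abs_le_of_finite hD
  rw [attractor_eq_range hD hB]
  refine isCompact_range (continuous_tsum (fun i => ?_)
    (((summable_nat_add_iff 1).mpr hB).mul_left M) fun i d => norm_intCast_smul_le hM (d i).2 _)
  exact ((continuous_of_discreteTopology (f := fun δ : D => ((δ : ℤ) : ℝ))).comp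
    (continuous_apply i)).smul continuous_const

lemma exists_forall_norm_pow_mulVec_sub_lt {ε : ℝ} (hε : 0 < ε) :
    ∃ n, ∀ a ∈ attractor A D v, ∀ b ∈ attractor A D v, ‖(toR A)⁻¹ ^ n *ᵥ (a - b)‖ < ε := by
  obtain ⟨M, hM⟩ := exists_forall_abs_le_of_finite hD
  have htail : Tendsto (fun n => 2 * M * ∑' i, ‖(toR A)⁻¹ ^ (i + (n + 1)) *ᵥ vecR v‖)
      atTop (𝓝 0) := by
    simpa only [mul_zero, Function.comp_def] using
      ((tendsto_sum_nat_add fun i => ‖(toR A)⁻¹ ^ i *ᵥ vecR v‖).comp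
        (tendsto_add_atTop_nat 1)).const_mul (2 * M)
  obtain ⟨n, hn⟩ := (htail.eventually (gt_mem_nhds hε)).exists
  refine ⟨n, fun a ha b hb => ?_⟩
  rw [mulVec_sub]
  calc ‖(toR A)⁻¹ ^ n *ᵥ a - (toR A)⁻¹ ^ n *ᵥ b‖
      ≤ ‖(toR A)⁻¹ ^ n *ᵥ a‖ + ‖(toR A)⁻¹ ^ n *ᵥ b‖ := norm_sub_le _ _
    _ ≤ M * ∑' i, ‖(toR A)⁻¹ ^ (i + (n + 1)) *ᵥ vecR v‖
        + M * ∑' i, ‖(toR A)⁻¹ ^ (i + (n + 1)) *ᵥ vecR v‖ :=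
      add_le_add (norm_pow_mulVec_le hM hB ha n) (norm_pow_mulVec_le hM hB hb n)
    _ < ε := by linarith

lemma mem_attractor_sub_attractor {c : ℕ → ℤ} (hpos : ∀ i, (c i)⁺ ∈ D)
    (hneg : ∀ i, (c i)⁻ ∈ D) {x : Fin 2 → ℝ}
    (hx : HasSum (fun i => (c i : ℝ) • (toR A)⁻¹ ^ (i + 1) *ᵥ vecR v) x) :
    x ∈ attractor A D v - attractor A D v := by
  have hp := (summable_digitSeries hD hB hpos).hasSum
  have hn := (summable_digitSeries hD hB hneg).hasSum
  refine ⟨_, ⟨_, hpos, hp⟩, _, ⟨_, hneg, hn⟩, (hx.unique ?_).symm⟩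
  simpa only [← sub_smul, ← Int.cast_sub, posPart_sub_negPart] using hp.sub hn

lemma exists_eq_digitMap {x : Fin 2 → ℝ} (hx : x ∈ attractor A D v) :
    ∃ δ ∈ D, ∃ y ∈ attractor A D v, x = digitMap A v δ y := by
  obtain ⟨d, hd, hsum⟩ := hx
  have hy := (summable_digitSeries hD hB fun i => hd (i + 1)).hasSum
  exact ⟨d 0, hd 0, _, ⟨_, fun i => hd (i + 1), hy⟩,
    hsum.unique (hasSum_digitMap hy rfl fun _ => rfl)⟩

variable {δ₀ : ℤ} (hδ₀ : δ₀ ∈ D) (hroot : ∀ δ ∈ D, ReflTransGen (DigitAdj A D v) δ δ₀)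
include hδ₀ hroot

lemma reflTransGen_attractorStep (n : ℕ) {x y : Fin 2 → ℝ} (hx : x ∈ attractor A D v)
    (hy : y ∈ attractor A D v) : ReflTransGen (AttractorStep A D v n) x y := by
  induction n generalizing x y with
  | zero => exact .single ⟨hx, hy, y, hy, x, hx, by rw [pow_zero, one_mulVec]⟩
  | succ n ih =>
    have hp := tsum_mem_attractor hD hB fun _ => hδ₀
    set p := ∑' i, (δ₀ : ℝ) • (toR A)⁻¹ ^ (i + 1) *ᵥ vecR v
    have hlift : ∀ δ ∈ D, ∀ x ∈ attractor A D v, ∀ y ∈ attractor A D v,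
        ReflTransGen (AttractorStep A D v (n + 1)) (digitMap A v δ x) (digitMap A v δ y) :=
      fun δ hδ x hx y hy => ReflTransGen.lift _ (fun _ _ h => h.digitMap hδ) _ _ (ih hx hy)
    have hreach : ∀ δ, ReflTransGen (DigitAdj A D v) δ δ₀ → ∀ x ∈ attractor A D v,
        ReflTransGen (AttractorStep A D v (n + 1)) (digitMap A v δ x) (digitMap A v δ₀ p) := by
      intro δ hδ
      induction hδ using ReflTransGen.head_induction_on with
      | refl => exact fun x hx => hlift δ₀ hδ₀ x hx p hp
      | head hadj _ ih' =>
        obtain ⟨hδ, -, a, ha, b, hb, hab⟩ := hadj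
        exact fun x hx => (hlift _ hδ x hx b hb).trans (digitMap_eq_of_sub_eq hab ▸ ih' a ha)
    obtain ⟨δ, hδ, x', hx', rfl⟩ := exists_eq_digitMap hD hB hx
    obtain ⟨δ', hδ', y', hy', rfl⟩ := exists_eq_digitMap hD hB hy
    exact (hreach δ (hroot δ hδ) x' hx').trans <| ReflTransGen.mono (fun _ _ h => h.symm) _ _
      (ReflTransGen.swap _ _ (hreach δ' (hroot δ' hδ') y' hy'))

theorem isConnected_attractor : IsConnected (attractor A D v) := by
  refine ⟨⟨_, tsum_mem_attractor hD hB fun _ => hδ₀⟩,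
    (isCompact_attractor hD hB).isPreconnected_of_forall_reflTransGen fun ε hε x hx y hy => ?_⟩
  obtain ⟨n, hn⟩ := exists_forall_norm_pow_mulVec_sub_lt hD hB hε
  refine ReflTransGen.mono (fun a b h => ?_) _ _
    (reflTransGen_attractorStep hD hB hδ₀ hroot n hx hy)
  obtain ⟨ha, hb, c, hc, d, hd, hab⟩ := h
  exact ⟨ha, hb, by rw [dist_comm, dist_eq_norm, hab]; exact hn c hc d hd⟩

end Attractor

section Charpoly

variable {A : Matrix (Fin 2) (Fin 2) ℤ} (hchar : A.charpoly = X ^ 2 + C 4 * X + C 4)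
include hchar

lemma toR_add_two_mul_self : (toR A + 2) * (toR A + 2) = 0 := by
  have hsq : A.charpoly = (X + 2) ^ 2 := by
    rw [hchar, map_ofNat C 4]
    ring
  have h := Matrix.aeval_self_charpoly (A.map (Int.castRingHom ℝ))
  rwa [Matrix.charpoly_map, hsq, Polynomial.map_pow, Polynomial.map_add, map_X,
    Polynomial.map_ofNat, map_pow, map_add, aeval_X, map_ofNat, sq] at h

lemma inv_toR_eq : (toR A)⁻¹ = (-1/2 : ℝ) • (1 + (1/2 : ℝ) • (toR A + 2)) := by
  refine Matrix.inv_eq_right_inv ?_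
  have hN := toR_add_two_mul_self hchar
  set N := toR A + 2
  rw [show toR A = N - 2 by simp [N]]
  simp only [sub_mul, mul_smul_comm, mul_add, mul_one, hN, smul_add, two_mul]
  rw [show (2 : Matrix (Fin 2) (Fin 2) ℝ) = (2 : ℝ) • 1 by rw [two_smul, one_add_one_eq_two]]
  module

lemma inv_toR_pow_mulVec (k : ℕ) (x : Fin 2 → ℝ) :
    (toR A)⁻¹ ^ k *ᵥ x = (-1/2 : ℝ) ^ k • (x + (k / 2 : ℝ) • ((toR A + 2) *ᵥ x)) := by
  have hN : ((1/2 : ℝ) • (toR A + 2)) * ((1/2 : ℝ) • (toR A + 2)) = 0 := by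
    rw [smul_mul_smul_comm, toR_add_two_mul_self hchar, smul_zero]
  rw [inv_toR_eq hchar, _root_.smul_pow, one_add_pow_of_mul_self_eq_zero hN, smul_mulVec,
    add_mulVec, one_mulVec, ← Nat.cast_smul_eq_nsmul ℝ, smul_smul, smul_mulVec, mul_one_div]

lemma summable_norm_inv_toR_pow_mulVec (x : Fin 2 → ℝ) :
    Summable fun i => ‖(toR A)⁻¹ ^ i *ᵥ x‖ := by
  refine .of_nonneg_of_le (fun _ => norm_nonneg _) (fun i => ?_)
    ((summable_geometric_two.mul_right ‖x‖).add
      (((summable_pow_mul_geometric_of_norm_lt_one 1 (r := (1/2 : ℝ)) (by norm_num)).mul_right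
        (‖(toR A + 2) *ᵥ x‖ / 2))))
  rw [inv_toR_pow_mulVec hchar, norm_smul, norm_pow, norm_div, norm_neg, norm_one,
    Real.norm_two]
  calc (1 / 2) ^ i * ‖x + (i / 2 : ℝ) • ((toR A + 2) *ᵥ x)‖
      ≤ (1 / 2) ^ i * (‖x‖ + (i / 2) * ‖(toR A + 2) *ᵥ x‖) := by
        gcongr
        refine (norm_add_le _ _).trans_eq ?_
        rw [norm_smul, Real.norm_of_nonneg (by positivity)]
    _ = _ := by ring

lemma hasSum_smul_inv_toR_pow_mulVec {c : ℕ → ℝ} {α β : ℝ}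
    (hα : HasSum (fun i => c i * (-1/2) ^ (i + 1)) α)
    (hβ : HasSum (fun i => c i * (-1/2) ^ (i + 1) * ((i + 1) / 2)) β) (x : Fin 2 → ℝ) :
    HasSum (fun i => c i • (toR A)⁻¹ ^ (i + 1) *ᵥ x) (α • x + β • ((toR A + 2) *ᵥ x)) := by
  have hsplit : (fun i => c i • (toR A)⁻¹ ^ (i + 1) *ᵥ x) = fun i =>
      (c i * (-1/2) ^ (i + 1)) • x + (c i * (-1/2) ^ (i + 1) * ((i + 1) / 2)) •
        ((toR A + 2) *ᵥ x) := by
    ext1 i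
    rw [inv_toR_pow_mulVec hchar]
    push_cast
    module
  rw [hsplit]
  exact (hα.smul_const x).add (hβ.smul_const _)

end Charpoly

def expansionCoeff (i : ℕ) : ℤ := if i = 0 then -2 else if i = 1 then 2 else 2 * (-1) ^ i

lemma expansionCoeff_eq_two_or (i : ℕ) : expansionCoeff i = 2 ∨ expansionCoeff i = -2 := by
  unfold expansionCoeff
  rcases neg_one_pow_eq_or ℤ i with h | h <;> split_ifs <;> simp [h]

lemma cast_expansionCoeff (i : ℕ) :
    (expansionCoeff i : ℝ) = if i = 0 then -2 else if i = 1 then 2 else 2 * (-1) ^ i := by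
  unfold expansionCoeff
  split_ifs <;> push_cast <;> rfl

lemma cast_two_mul_expansionCoeff (i : ℕ) :
    ((2 * expansionCoeff i : ℤ) : ℝ) = if i = 0 then -4 else if i = 1 then 4 else 4 * (-1) ^ i := by
  unfold expansionCoeff
  split_ifs <;> push_cast <;> ring

lemma posPart_negPart_expansionCoeff_mem (i : ℕ) :
    (expansionCoeff i)⁺ ∈ ({0, 1, 2, 4} : Set ℤ) ∧ (expansionCoeff i)⁻ ∈ ({0, 1, 2, 4} : Set ℤ) ∧
    (2 * expansionCoeff i)⁺ ∈ ({0, 1, 2, 4} : Set ℤ) ∧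
    (2 * expansionCoeff i)⁻ ∈ ({0, 1, 2, 4} : Set ℤ) := by
  rcases expansionCoeff_eq_two_or i with h | h <;> rw [h] <;> decide

lemma cast_expansionCoeff_mul_pow {i : ℕ} (hi : 2 ≤ i) :
    (expansionCoeff i : ℝ) * (-1/2) ^ (i + 1) = -(1/2) ^ i := by
  simp only [expansionCoeff, if_neg (show i ≠ 0 by omega), if_neg (show i ≠ 1 by omega)]
  push_cast
  have hsq : (-1 : ℝ) ^ i * (-1) ^ i = 1 := by rw [← mul_pow]; norm_num
  rw [show (-1/2 : ℝ) = -1 * (1/2) by norm_num, mul_pow]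
  linear_combination (-(1/2 : ℝ) ^ i) * hsq

lemma hasSum_expansionCoeff_mul_pow :
    HasSum (fun i => (expansionCoeff i : ℝ) * (-1/2) ^ (i + 1)) 1 := by
  rw [← hasSum_nat_add_iff' 2]
  have htail : (fun n => (expansionCoeff (n + 2) : ℝ) * (-1/2) ^ (n + 2 + 1))
      = fun n => -(1/2) ^ 2 * (1/2) ^ n := by
    ext n
    rw [cast_expansionCoeff_mul_pow (by omega)]
    ring
  have hhead : 1 - ∑ i ∈ Finset.range 2, (expansionCoeff i : ℝ) * (-1/2) ^ (i + 1)
      = -(1/2) ^ 2 * 2 := by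
    norm_num [Finset.sum_range_succ, expansionCoeff]
  rw [htail, hhead]
  exact hasSum_geometric_two.mul_left _

lemma hasSum_expansionCoeff_mul_pow_mul :
    HasSum (fun i => (expansionCoeff i : ℝ) * (-1/2) ^ (i + 1) * ((i + 1) / 2)) 0 := by
  have hmoment : HasSum (fun n : ℕ => (n : ℝ) * (1/2) ^ n) 2 := by
    have := hasSum_coe_mul_geometric_of_norm_lt_one (r := (1/2 : ℝ)) (by norm_num)
    norm_num at this
    exact this
  rw [← hasSum_nat_add_iff' 3] at hmoment
  rw [← hasSum_nat_add_iff' 2]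
  have htail : (fun n => (expansionCoeff (n + 2) : ℝ) * (-1/2) ^ (n + 2 + 1)
        * ((((n + 2 : ℕ) : ℝ) + 1) / 2))
      = fun n => -(((n + 3 : ℕ) : ℝ) * (1/2) ^ (n + 3)) := by
    ext n
    rw [cast_expansionCoeff_mul_pow (by omega)]
    push_cast
    ring
  have hhead : 0 - ∑ i ∈ Finset.range 2,
        (expansionCoeff i : ℝ) * (-1/2) ^ (i + 1) * ((i + 1) / 2)
      = -(2 - ∑ i ∈ Finset.range 3, (i : ℝ) * (1/2) ^ i) := by
    norm_num [Finset.sum_range_succ, expansionCoeff]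
  rw [htail, hhead]
  exact hmoment.neg

lemma hasSum_expansionCoeff_smul {A : Matrix (Fin 2) (Fin 2) ℤ}
    (hchar : A.charpoly = X ^ 2 + C 4 * X + C 4) (x : Fin 2 → ℝ) :
    HasSum (fun i => (expansionCoeff i : ℝ) • (toR A)⁻¹ ^ (i + 1) *ᵥ x) x := by
  simpa using hasSum_smul_inv_toR_pow_mulVec hchar hasSum_expansionCoeff_mul_pow
    hasSum_expansionCoeff_mul_pow_mul x

lemma reflTransGen_digitAdj_zero {A : Matrix (Fin 2) (Fin 2) ℤ} {v : Fin 2 → ℤ}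
    (h1 : vecR v ∈ attractor A {0, 1, 2, 4} v - attractor A {0, 1, 2, 4} v)
    (h2 : (2 : ℝ) • vecR v ∈ attractor A {0, 1, 2, 4} v - attractor A {0, 1, 2, 4} v) :
    ∀ δ ∈ ({0, 1, 2, 4} : Set ℤ), ReflTransGen (DigitAdj A {0, 1, 2, 4} v) δ 0 := by
  have h10 : DigitAdj A {0, 1, 2, 4} v 1 0 := ⟨by simp, by simp, by simpa using h1⟩
  have h21 : DigitAdj A {0, 1, 2, 4} v 2 1 := ⟨by simp, by simp, by norm_num; exact h1⟩
  have h42 : DigitAdj A {0, 1, 2, 4} v 4 2 := ⟨by simp, by simp, by norm_num; exact h2⟩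
  rintro δ (rfl | rfl | rfl | rfl)
  · exact .refl
  · exact .single h10
  · exact .head h21 (.single h10)
  · exact .head h42 (.head h21 (.single h10))

theorem stmt16_general (A : Matrix (Fin 2) (Fin 2) ℤ)
    (hchar : A.charpoly = X ^ 2 + C 4 * X + C 4)
    (v : Fin 2 → ℤ) :
    HasSum (fun i : ℕ =>
        (if i = 0 then (-2 : ℝ) else if i = 1 then 2 else 2 * (-1 : ℝ) ^ i) •
          ((toR A)⁻¹ ^ (i + 1)).mulVec (vecR v)) (vecR v) ∧
    HasSum (fun i : ℕ =>
        (if i = 0 then (-4 : ℝ) else if i = 1 then 4 else 4 * (-1 : ℝ) ^ i) •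
          ((toR A)⁻¹ ^ (i + 1)).mulVec (vecR v)) ((2 : ℝ) • vecR v) ∧
    vecR v ∈
      attractor A {0, 1, 2, 4} v - attractor A {0, 1, 2, 4} v ∧
    (2 : ℝ) • vecR v ∈
      attractor A {0, 1, 2, 4} v - attractor A {0, 1, 2, 4} v ∧
    IsConnected (attractor A {0, 1, 2, 4} v) := by
  have hD : ({0, 1, 2, 4} : Set ℤ).Finite := Set.toFinite _
  have hB := summable_norm_inv_toR_pow_mulVec hchar (vecR v)
  have hc1 := hasSum_expansionCoeff_smul hchar (vecR v)
  have hc2 : HasSum (fun i => ((2 * expansionCoeff i : ℤ) : ℝ) • (toR A)⁻¹ ^ (i + 1) *ᵥ vecR v)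
      ((2 : ℝ) • vecR v) := by
    simpa only [Int.cast_mul, Int.cast_ofNat, mul_smul] using hc1.const_smul (2 : ℝ)
  have hv1 := mem_attractor_sub_attractor hD hB
    (fun i => (posPart_negPart_expansionCoeff_mem i).1)
    (fun i => (posPart_negPart_expansionCoeff_mem i).2.1) hc1
  have hv2 := mem_attractor_sub_attractor hD hB
    (fun i => (posPart_negPart_expansionCoeff_mem i).2.2.1)
    (fun i => (posPart_negPart_expansionCoeff_mem i).2.2.2) hc2
  refine ⟨?_, ?_, hv1, hv2,
    isConnected_attractor hD hB (by simp) (reflTransGen_digitAdj_zero hv1 hv2)⟩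
  · simpa only [cast_expansionCoeff] using hc1
  · simpa only [cast_two_mul_expansionCoeff] using hc2

/-- for characteristic polynomial `x² + 4x + 4` and digit set
`{0, 1, 2, 4} v`: `v = -2A⁻¹v + 2A⁻²v + 2A⁻³v - 2A⁻⁴v + 2A⁻⁵v - 2A⁻⁶v + ⋯ ∈ T - T`
and `2v = -4A⁻¹v + 4A⁻²v + 4A⁻³v - 4A⁻⁴v + 4A⁻⁵v - 4A⁻⁶v + ⋯ ∈ T - T`, so `T` is
connected. (The summation index `i : ℕ` corresponds to the power `A^{-(i+1)}`; the
coefficient of `A^{-(i+1)}` is `-2, 2, 2, -2, 2, -2, …`, i.e. `2·(-1)^i` for `i ≥ 2`.) -/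
theorem stmt16 (A : Matrix (Fin 2) (Fin 2) ℤ)
    (hA : IsExpanding A)
    (hchar : A.charpoly = X ^ 2 + C 4 * X + C 4)
    (v : Fin 2 → ℤ)
    (hv : LinearIndependent ℝ ![vecR v, (toR A).mulVec (vecR v)]) :
    HasSum (fun i : ℕ =>
        (if i = 0 then (-2 : ℝ) else if i = 1 then 2 else 2 * (-1 : ℝ) ^ i) •
          ((toR A)⁻¹ ^ (i + 1)).mulVec (vecR v)) (vecR v) ∧
    HasSum (fun i : ℕ =>
        (if i = 0 then (-4 : ℝ) else if i = 1 then 4 else 4 * (-1 : ℝ) ^ i) •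
          ((toR A)⁻¹ ^ (i + 1)).mulVec (vecR v)) ((2 : ℝ) • vecR v) ∧
    vecR v ∈
      attractor A {0, 1, 2, 4} v - attractor A {0, 1, 2, 4} v ∧
    (2 : ℝ) • vecR v ∈
      attractor A {0, 1, 2, 4} v - attractor A {0, 1, 2, 4} v ∧
    IsConnected (attractor A {0, 1, 2, 4} v) :=
  stmt16_general A hchar v
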